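/- Backward move B2: If (α_n)_{n≥0}, (β_n)_{n≥0} form a Bailey pair with respect to base a, where a ≠ 0 and a q^m ≠ 1 for all m ≥ 1, then the sequences β'_n = ((−1)^n a^{−n} q^{−binom(n,2)} / (−q;q)_n) Σ_{j=0}^{n} (−1)^j (q^{binom(n−j,2)} (−a;q)_j / (q;q)_{n−j}) β_j and α'_n = ((−a;q)_n q^{−binom(n,2)} a^{−n} / (−q;q)_n) α_n also form a Bailey pair with respect to base a, where binom(m,2) = m(m−1)/2. -/

import Mathlib

open Finset

noncomputable def qPoch (a q : ℂ) (n : ℕ) : ℂ :=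
  ∏ t ∈ Finset.range n, (1 - a * q ^ t)

noncomputable def qPochInf (a q : ℂ) : ℂ :=
  ∏' t : ℕ, (1 - a * q ^ t)

def IsBaileyPair (q a : ℂ) (α β : ℕ → ℂ) : Prop :=
  ∀ n : ℕ, β n =
    ∑ t ∈ Finset.range (n + 1), α t / (qPoch q q (n - t) * qPoch (a * q) q (n + t))

/-!
Substituting the Bailey relation for `β j` into `β' n` and exchanging the two sums, the
coefficient of `α t` is a terminating sum over `j = t + k`, `n = t + N`. Writing
`1 / ((q)_k (q)_{N-k}) = [N, k]_q / (q)_N` turns it into the `q`-binomial identity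
`∑ₖ (-1)^k q^C(N-k,2) [N, k]_q (b)_k (c q^k)_{N-k} = q^C(N,2) ∏_{i<N} (b - c q^i)`
at `b = -a q^t`, `c = a q^(2t+1)`, where the product is `(-a q^t)^N (-q^(t+1))_N`.
The identity follows by induction on `N` from the `q`-Pascal rule, which gives
`F_{N+1}(b, c) = q^N (1 - c q^N) F_N(b, c) - (1 - b) F_N(b q, c q)` for the left side `F_N(b, c)`.
-/

lemma choose_two_succ (m : ℕ) : (m + 1).choose 2 = m.choose 2 + m := by
  simp [Nat.choose_succ_succ', add_comm]

lemma choose_two_add (m n : ℕ) : (m + n).choose 2 = m.choose 2 + n.choose 2 + m * n := by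
  induction n with
  | zero => simp
  | succ n ih => rw [← add_assoc, choose_two_succ, ih, choose_two_succ]; ring

section qPochhammer

variable (a q : ℂ)

@[simp]
lemma qPoch_zero : qPoch a q 0 = 1 := prod_range_zero _

lemma qPoch_succ (n : ℕ) : qPoch a q (n + 1) = qPoch a q n * (1 - a * q ^ n) :=
  prod_range_succ _ _

lemma qPoch_add (m n : ℕ) : qPoch a q (m + n) = qPoch a q m * qPoch (a * q ^ m) q n := by
  simp only [qPoch, prod_range_add, pow_add, mul_assoc]

lemma qPoch_succ' (n : ℕ) : qPoch a q (n + 1) = (1 - a) * qPoch (a * q) q n := by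
  rw [add_comm, qPoch_add, pow_one]
  simp [qPoch]

variable {a q}

lemma qPoch_ne_zero {n : ℕ} (h : ∀ i < n, a * q ^ i ≠ 1) : qPoch a q n ≠ 0 :=
  prod_ne_zero_iff.mpr fun i hi => sub_ne_zero.mpr (h i (mem_range.mp hi)).symm

lemma qPoch_ne_zero_of_norm_lt_one (ha : ‖a‖ < 1) (hq : ‖q‖ ≤ 1) (n : ℕ) :
    qPoch a q n ≠ 0 :=
  qPoch_ne_zero fun i _ h => by
    have : ‖a * q ^ i‖ < 1 := by
      rw [norm_mul, norm_pow]
      exact mul_lt_one_of_nonneg_of_lt_one_left (norm_nonneg a) ha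
        (pow_le_one₀ (norm_nonneg q) hq)
    simp [h] at this

end qPochhammer

def qBinom (q : ℂ) : ℕ → ℕ → ℂ
  | _, 0 => 1
  | 0, _ + 1 => 0
  | N + 1, k + 1 => q ^ (k + 1) * qBinom q N (k + 1) + qBinom q N k

section qBinom

variable (q : ℂ)

@[simp]
lemma qBinom_zero_right (N : ℕ) : qBinom q N 0 = 1 := by cases N <;> rfl

lemma qBinom_succ_succ (N k : ℕ) :
    qBinom q (N + 1) (k + 1) = q ^ (k + 1) * qBinom q N (k + 1) + qBinom q N k := rfl

lemma qBinom_eq_zero_of_lt : ∀ {N k : ℕ}, N < k → qBinom q N k = 0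
  | 0, _ + 1, _ => rfl
  | N + 1, k + 1, h => by
    rw [qBinom_succ_succ, qBinom_eq_zero_of_lt (by omega), qBinom_eq_zero_of_lt (by omega)]
    ring

@[simp]
lemma qBinom_self : ∀ N : ℕ, qBinom q N N = 1
  | 0 => rfl
  | N + 1 => by rw [qBinom_succ_succ, qBinom_eq_zero_of_lt q (by omega), qBinom_self N]; ring

lemma qPoch_mul_qPoch_mul_qBinom (k m : ℕ) :
    qPoch q q k * qPoch q q m * qBinom q (k + m) k = qPoch q q (k + m) := by
  induction k generalizing m with
  | zero => simp
  | succ k ihk =>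
    induction m with
    | zero => simp
    | succ m ihm =>
      have hB := ihk (m + 1)
      rw [show k + 1 + m = k + (m + 1) by omega] at ihm
      rw [show k + 1 + (m + 1) = k + (m + 1) + 1 by omega, qBinom_succ_succ,
        qPoch_succ q q (k + (m + 1))]
      rw [qPoch_succ q q m] at hB ⊢
      rw [qPoch_succ q q k] at ihm ⊢
      linear_combination (1 - q * q ^ m) * q ^ (k + 1) * ihm + (1 - q * q ^ k) * hB

lemma sum_range_qBinom_succ_mul (N : ℕ) (φ : ℕ → ℂ) :
    ∑ k ∈ range (N + 2), qBinom q (N + 1) k * φ k =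
      ∑ k ∈ range (N + 1), q ^ k * qBinom q N k * φ k +
        ∑ k ∈ range (N + 1), qBinom q N k * φ (k + 1) := by
  have hlast : ∑ k ∈ range (N + 1), q ^ k * qBinom q N k * φ k =
      ∑ k ∈ range (N + 2), q ^ k * qBinom q N k * φ k := by
    rw [sum_range_succ _ (N + 1), qBinom_eq_zero_of_lt q (Nat.lt_succ_self N)]
    simp
  rw [hlast, sum_range_succ' _ (N + 1), sum_range_succ' (fun k => q ^ k * _ * _) (N + 1)]
  simp only [qBinom_succ_succ, qBinom_zero_right, add_mul, sum_add_distrib]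
  ring

theorem sum_qBinom_qPoch_mul_qPoch (N : ℕ) (b c : ℂ) :
    ∑ k ∈ range (N + 1),
        qBinom q N k *
          ((-1) ^ k * q ^ ((N - k).choose 2) * qPoch b q k * qPoch (c * q ^ k) q (N - k)) =
      q ^ (N.choose 2) * ∏ i ∈ range N, (b - c * q ^ i) := by
  induction N generalizing b c with
  | zero => simp
  | succ N ih =>
    rw [sum_range_qBinom_succ_mul]
    have hshift : ∀ k ∈ range (N + 1),
        q ^ k * qBinom q N k * ((-1) ^ k * q ^ ((N + 1 - k).choose 2) * qPoch b q k *
          qPoch (c * q ^ k) q (N + 1 - k)) =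
        q ^ N * (1 - c * q ^ N) * (qBinom q N k *
          ((-1) ^ k * q ^ ((N - k).choose 2) * qPoch b q k * qPoch (c * q ^ k) q (N - k))) := by
      intro k hk
      obtain ⟨m, rfl⟩ := Nat.exists_eq_add_of_le (Nat.lt_succ_iff.mp (mem_range.mp hk))
      rw [show k + m + 1 - k = m + 1 by omega, Nat.add_sub_cancel_left, choose_two_succ,
        qPoch_succ]
      ring
    have hpeel : ∀ k ∈ range (N + 1),
        qBinom q N k * ((-1) ^ (k + 1) * q ^ ((N + 1 - (k + 1)).choose 2) * qPoch b q (k + 1) *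
          qPoch (c * q ^ (k + 1)) q (N + 1 - (k + 1))) =
        -(1 - b) * (qBinom q N k *
          ((-1) ^ k * q ^ ((N - k).choose 2) * qPoch (b * q) q k *
            qPoch (c * q * q ^ k) q (N - k))) := by
      intro k _
      rw [Nat.add_sub_add_right, qPoch_succ', pow_succ' q k, ← mul_assoc c]
      ring
    have hscale : ∏ i ∈ range N, (b * q - c * q * q ^ i) =
        q ^ N * ∏ i ∈ range N, (b - c * q ^ i) := by
      calc ∏ i ∈ range N, (b * q - c * q * q ^ i) = ∏ i ∈ range N, q * (b - c * q ^ i) :=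
            prod_congr rfl fun i _ => by ring
        _ = q ^ N * ∏ i ∈ range N, (b - c * q ^ i) := by rw [← pow_card_mul_prod, card_range]
    rw [sum_congr rfl hshift, sum_congr rfl hpeel, ← mul_sum, ← mul_sum, ih, ih, hscale,
      prod_range_succ, choose_two_succ, pow_add]
    ring

end qBinom

section coefficient

variable {q a : ℂ}

lemma b2_coefficient_sum (hqq : ∀ m, qPoch q q m ≠ 0) (haq : ∀ m, qPoch (a * q) q m ≠ 0)
    (t N : ℕ) :
    ∑ k ∈ range (N + 1), (-1) ^ k * q ^ ((N - k).choose 2) * qPoch (-a) q (t + k) /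
        (qPoch q q (N - k) * qPoch q q k * qPoch (a * q) q (t + k + t)) =
      (-1) ^ N * a ^ N * q ^ (N.choose 2 + t * N) * qPoch (-a) q t * qPoch (-q * q ^ t) q N /
        (qPoch q q N * qPoch (a * q) q (t + N + t)) := by
  have hterm : ∀ k ∈ range (N + 1),
      (-1) ^ k * q ^ ((N - k).choose 2) * qPoch (-a) q (t + k) /
        (qPoch q q (N - k) * qPoch q q k * qPoch (a * q) q (t + k + t)) =
      qPoch (-a) q t / (qPoch q q N * qPoch (a * q) q (t + N + t)) *
        (qBinom q N k * ((-1) ^ k * q ^ ((N - k).choose 2) * qPoch (-a * q ^ t) q k *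
          qPoch (a * q ^ (2 * t + 1) * q ^ k) q (N - k))) := by
    intro k hk
    obtain ⟨m, rfl⟩ := Nat.exists_eq_add_of_le (mem_range_succ_iff.mp hk)
    have hG := qPoch_mul_qPoch_mul_qBinom q k m
    have hY : qPoch (a * q) q (t + (k + m) + t) =
        qPoch (a * q) q (t + k + t) * qPoch (a * q ^ (2 * t + 1) * q ^ k) q m := by
      rw [show t + (k + m) + t = t + k + t + m by omega, qPoch_add]
      congr 2
      ring
    have hG0 : qBinom q (k + m) k ≠ 0 := fun h0 => hqq (k + m) (by rw [← hG, h0, mul_zero])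
    have hY0 : qPoch (a * q ^ (2 * t + 1) * q ^ k) q m ≠ 0 :=
      right_ne_zero_of_mul (hY ▸ haq _)
    rw [Nat.add_sub_cancel_left, qPoch_add (-a) q t k, ← hG, hY]
    field_simp [hqq, haq]
  have hprod : ∏ i ∈ range N, (-a * q ^ t - a * q ^ (2 * t + 1) * q ^ i) =
      (-a * q ^ t) ^ N * qPoch (-q * q ^ t) q N := by
    calc ∏ i ∈ range N, (-a * q ^ t - a * q ^ (2 * t + 1) * q ^ i) =
        ∏ i ∈ range N, -a * q ^ t * (1 - -q * q ^ t * q ^ i) :=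
          prod_congr rfl fun i _ => by ring
      _ = _ := by rw [← pow_card_mul_prod, card_range]; rfl
  rw [sum_congr rfl hterm, ← mul_sum, sum_qBinom_qPoch_mul_qPoch, hprod]
  ring

lemma b2_coefficient (hq : q ≠ 0) (ha : a ≠ 0) (hqq : ∀ m, qPoch q q m ≠ 0)
    (hnq : ∀ m, qPoch (-q) q m ≠ 0) (haq : ∀ m, qPoch (a * q) q m ≠ 0) (t N : ℕ) :
    ∑ k ∈ range (N + 1),
        (-1) ^ (t + N) * a ^ (-((t + N : ℕ) : ℤ)) * q ^ (-((t + N).choose 2 : ℤ)) /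
          qPoch (-q) q (t + N) *
        ((-1) ^ (t + k) * (q ^ ((N - k).choose 2) * qPoch (-a) q (t + k) / qPoch q q (N - k)) /
          (qPoch q q k * qPoch (a * q) q (t + k + t))) =
      qPoch (-a) q t * q ^ (-(t.choose 2 : ℤ)) * a ^ (-(t : ℤ)) / qPoch (-q) q t /
        (qPoch q q N * qPoch (a * q) q (t + N + t)) := by
  -- `(-1) ^ n` is its own inverse; in this form `field_simp` cancels the signs.
  have hsign : (-1 : ℂ) ^ (t + N) = ((-1) ^ t)⁻¹ * ((-1) ^ N)⁻¹ := by
    rw [← mul_inv, ← pow_add, ← inv_pow, inv_neg_one]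
  have hnqN := hnq (t + N)
  rw [qPoch_add] at hnqN
  calc _ = (-1) ^ (t + N) * (-1) ^ t * a ^ (-((t + N : ℕ) : ℤ)) *
        q ^ (-((t + N).choose 2 : ℤ)) / qPoch (-q) q (t + N) *
        ∑ k ∈ range (N + 1), (-1) ^ k * q ^ ((N - k).choose 2) * qPoch (-a) q (t + k) /
          (qPoch q q (N - k) * qPoch q q k * qPoch (a * q) q (t + k + t)) := by
        rw [mul_sum]
        exact sum_congr rfl fun k _ => by rw [pow_add _ t k]; ring
    _ = _ := by
      rw [b2_coefficient_sum hqq haq, qPoch_add (-q) q t N, choose_two_add, hsign]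
      -- an atom, so that `field_simp` cannot renormalize the base `-q * q ^ t` away from `hnqN`
      generalize qPoch (-q * q ^ t) q N = X at hnqN ⊢
      simp only [zpow_neg, zpow_natCast]
      field_simp [right_ne_zero_of_mul hnqN]
      ring

end coefficient

theorem backward_move_B2 (q a : ℂ) (hq0 : 0 < ‖q‖) (hq1 : ‖q‖ < 1)
    (ha0 : a ≠ 0) (ha : ∀ m : ℕ, 1 ≤ m → a * q ^ m ≠ 1)
    (α β : ℕ → ℂ) (h : IsBaileyPair q a α β) :
    IsBaileyPair q a
      (fun n => qPoch (-a) q n * q ^ (-(n.choose 2 : ℤ)) * a ^ (-(n : ℤ)) /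
        qPoch (-q) q n * α n)
      (fun n => (-1 : ℂ) ^ n * a ^ (-(n : ℤ)) * q ^ (-(n.choose 2 : ℤ)) / qPoch (-q) q n *
        ∑ j ∈ Finset.range (n + 1),
          (-1 : ℂ) ^ j * (q ^ ((n - j).choose 2) * qPoch (-a) q j / qPoch q q (n - j)) *
            β j) := by
  have hq : q ≠ 0 := norm_pos_iff.mp hq0
  have hqq : ∀ m, qPoch q q m ≠ 0 := qPoch_ne_zero_of_norm_lt_one hq1 hq1.le
  have hnq : ∀ m, qPoch (-q) q m ≠ 0 := qPoch_ne_zero_of_norm_lt_one (by rwa [norm_neg]) hq1.le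
  have haq : ∀ m, qPoch (a * q) q m ≠ 0 := fun m => qPoch_ne_zero fun i _ => by
    rw [mul_assoc, ← pow_succ']
    exact ha (i + 1) (by omega)
  intro n
  simp only [h _, mul_sum, range_eq_Ico]
  rw [← sum_Ico_Ico_comm]
  refine sum_congr rfl fun t ht => ?_
  obtain ⟨N, rfl⟩ := Nat.exists_eq_add_of_le (Nat.lt_succ_iff.mp (mem_Ico.mp ht).2)
  rw [sum_Ico_eq_sum_range, show t + N + 1 - t = N + 1 by omega]
  simp only [Nat.add_sub_add_left, Nat.add_sub_cancel_left]
  conv_rhs => rw [mul_div_right_comm, ← b2_coefficient hq ha0 hqq hnq haq t N, sum_mul]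
  exact sum_congr rfl fun k _ => by ring
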